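/- arXiv:1912.09714 — 7 statements merged into one kernel-verified Lean document; each statement's English description precedes it below -/
import Mathlib

section
/- For every integer t ≥ 2, the number of 2-multipartitions satisfies k(2, t+1) ≤ 2 · k(2, t). -/
open Multiset

/-- The number of `s`-multipartitions of `t`: tuples of `s` partitions whose sizes sum to `t`. -/
noncomputable def multipartitions (s t : ℕ) : ℕ :=
  Nat.card {f : Fin s → Σ n : ℕ, Nat.Partition n // ∑ i, (f i).1 = t}

def pcast {a b : ℕ} (h : a = b) (q : Nat.Partition a) : Nat.Partition b :=
  ⟨q.parts, q.parts_pos, by rw [q.parts_sum, h]⟩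

lemma sigma_ext {a b : ℕ} (q : Nat.Partition a) (r : Nat.Partition b) (h : a = b)
    (h2 : q.parts = r.parts) : (⟨a, q⟩ : Σ n : ℕ, Nat.Partition n) = ⟨b, r⟩ := by
  subst h
  simp [Nat.Partition.ext h2]

def invF (m : ℕ) : (Σ j : Fin (m + 1), Nat.Partition j × Nat.Partition (m - (j : ℕ))) →
    {f : Fin 2 → Σ n : ℕ, Nat.Partition n // ∑ i, (f i).1 = m}
  | ⟨⟨j, hj⟩, q, r⟩ => ⟨![⟨j, q⟩, ⟨m - j, r⟩], by rw [Fin.sum_univ_two]; show j + (m - j) = m; omega⟩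

def mpEquiv (m : ℕ) : {f : Fin 2 → Σ n : ℕ, Nat.Partition n // ∑ i, (f i).1 = m} ≃
    Σ j : Fin (m + 1), Nat.Partition j × Nat.Partition (m - (j : ℕ)) where
  toFun f := ⟨⟨(f.1 0).1, by
      have := f.2; rw [Fin.sum_univ_two] at this; omega⟩,
    (f.1 0).2, pcast (show (f.1 1).1 = m - (f.1 0).1 by
      have := f.2; rw [Fin.sum_univ_two] at this; omega) (f.1 1).2⟩
  invFun := invF m
  left_inv f := Subtype.ext (funext fun i => by
    have h := f.2; rw [Fin.sum_univ_two] at h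
    fin_cases i
    · rfl
    · exact sigma_ext _ _ (show m - (f.1 0).1 = (f.1 1).1 by omega) rfl)
  right_inv x := by
    rcases x with ⟨⟨j, hj⟩, q, r⟩
    simp only [invF]
    exact Sigma.ext rfl (heq_of_eq rfl)


def onesP (n : ℕ) : Nat.Partition n :=
  ⟨replicate n 1, fun hi => by simp [eq_of_mem_replicate hi], by simp⟩

def pp (n : ℕ) : ℕ := Fintype.card (Nat.Partition n)

namespace MPaux

variable {i : ℕ}

lemma parts_ne (l : Nat.Partition (i + 1)) : l.parts ≠ 0 := by
  intro h
  have := l.parts_sum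
  rw [h] at this
  simp at this

lemma parts_fin_ne (l : Nat.Partition (i + 1)) : l.parts.toFinset.Nonempty := by
  rw [Multiset.toFinset_nonempty]
  exact parts_ne l

/-- smallest part -/
def minp (l : Nat.Partition (i + 1)) : ℕ := l.parts.toFinset.min' (parts_fin_ne l)

lemma minp_mem (l : Nat.Partition (i + 1)) : minp l ∈ l.parts :=
  Multiset.mem_toFinset.1 (l.parts.toFinset.min'_mem _)

lemma minp_le (l : Nat.Partition (i + 1)) {x : ℕ} (hx : x ∈ l.parts) : minp l ≤ x :=
  l.parts.toFinset.min'_le x (Multiset.mem_toFinset.2 hx)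

lemma minp_two (l : Nat.Partition (i + 1)) (h : (1:ℕ) ∉ l.parts) : 2 ≤ minp l := by
  have h1 := l.parts_pos (minp_mem l)
  have : minp l ≠ 1 := fun he => h (by have hm := minp_mem l; rw [he] at hm; exact hm)
  omega

lemma sum_erase_of_mem {x : ℕ} (l : Nat.Partition (i + 1)) (h : x ∈ l.parts) :
    (l.parts.erase x).sum + x = i + 1 := by
  have := l.parts_sum
  rw [← Multiset.cons_erase h, Multiset.sum_cons] at this
  omega

/-- The key map : delete a part 1 if possible, else decrement the smallest part. -/
def F (l : Nat.Partition (i + 1)) : Bool × Nat.Partition i :=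
  if h : (1:ℕ) ∈ l.parts then
    (false, ⟨l.parts.erase 1,
      fun hx => l.parts_pos (Multiset.mem_of_mem_erase hx),
      by have := sum_erase_of_mem l h; omega⟩)
  else
    (true, ⟨(minp l - 1) ::ₘ l.parts.erase (minp l),
      by
        intro x hx
        rcases Multiset.mem_cons.1 hx with h1 | h1
        · have := minp_two l h; omega
        · exact l.parts_pos (Multiset.mem_of_mem_erase h1),
      by
        rw [Multiset.sum_cons]
        have := sum_erase_of_mem l (minp_mem l)
        have := minp_two l h
        omega⟩)

lemma F_inj : Function.Injective (F (i := i)) := by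
  intro l l' h
  by_cases h1 : (1:ℕ) ∈ l.parts <;> by_cases h1' : (1:ℕ) ∈ l'.parts <;>
    simp only [F, dif_pos, dif_neg, h1, h1', dite_true, dite_false] at h
  · -- both have a 1
    have hp : l.parts.erase 1 = l'.parts.erase 1 := congrArg Nat.Partition.parts (Prod.ext_iff.1 h).2
    refine Nat.Partition.ext ?_
    rw [← Multiset.cons_erase h1, ← Multiset.cons_erase h1', hp]
  · exact absurd (Prod.ext_iff.1 h).1 (by simp)
  · exact absurd (Prod.ext_iff.1 h).1 (by simp)
  · -- both 1-free
    have hp : (minp l - 1) ::ₘ l.parts.erase (minp l)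
        = (minp l' - 1) ::ₘ l'.parts.erase (minp l') := congrArg Nat.Partition.parts (Prod.ext_iff.1 h).2
    have h2 := minp_two l h1
    have h2' := minp_two l' h1'
    -- the two decremented minima are equal
    have key : minp l = minp l' := by
      by_contra hne
      have m1 : minp l' - 1 ∈ (minp l - 1) ::ₘ l.parts.erase (minp l) := by
        rw [hp]; exact Multiset.mem_cons_self _ _
      have m2 : minp l - 1 ∈ (minp l' - 1) ::ₘ l'.parts.erase (minp l') := by
        rw [← hp]; exact Multiset.mem_cons_self _ _
      rcases Multiset.mem_cons.1 m1 with e1 | e1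
      · omega
      · have le1 : minp l ≤ minp l' - 1 := minp_le l (Multiset.mem_of_mem_erase e1)
        rcases Multiset.mem_cons.1 m2 with e2 | e2
        · omega
        · have le2 : minp l' ≤ minp l - 1 := minp_le l' (Multiset.mem_of_mem_erase e2)
          omega
    refine Nat.Partition.ext ?_
    rw [← Multiset.cons_erase (minp_mem l), ← Multiset.cons_erase (minp_mem l'), key]
    congr 1
    have := hp
    rw [key] at this
    exact Multiset.cons_inj_right _ |>.1 this

lemma F_ne_ones (hi : 2 ≤ i) (l : Nat.Partition (i + 1)) : F l ≠ (true, onesP i) := by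
  intro h
  by_cases h1 : (1:ℕ) ∈ l.parts <;>
    simp only [F, dif_pos, dif_neg, h1, dite_true, dite_false] at h
  · exact absurd (congrArg Prod.fst h) (by simp)
  · have hp : (minp l - 1) ::ₘ l.parts.erase (minp l) = replicate i 1 :=
      congrArg Nat.Partition.parts (congrArg Prod.snd h)
    have h2 := minp_two l h1
    have hE : l.parts.erase (minp l) = 0 := by
      rw [Multiset.eq_zero_iff_forall_notMem]
      intro x hx
      have hx1 : x ∈ replicate i (1:ℕ) := by
        rw [← hp]; exact Multiset.mem_cons_of_mem hx
      have := eq_of_mem_replicate hx1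
      have := minp_le l (Multiset.mem_of_mem_erase hx)
      omega
    rw [hE] at hp
    have := congrArg Multiset.card hp
    simp at this
    omega

end MPaux

lemma pp_succ_le (i : ℕ) : pp (i + 1) ≤ 2 * pp i := by
  have := Fintype.card_le_of_injective _ MPaux.F_inj (α := Nat.Partition (i + 1))
  simpa [pp, two_mul] using this

lemma pp_succ_lt (i : ℕ) (hi : i ≠ 1) : pp (i + 1) + 1 ≤ 2 * pp i := by
  rcases Nat.lt_or_ge i 2 with h | h
  · have : i = 0 := by omega
    subst this
    simp [pp, Fintype.card_unique]
  · have := Fintype.card_lt_of_injective_of_notMem _ MPaux.F_inj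
      (fun ⟨l, hl⟩ => MPaux.F_ne_ones h l hl)
    simp only [Fintype.card_prod, Fintype.card_bool] at this
    simp only [pp]
    omega



namespace MPaux2

variable {t : ℕ}

lemma parts_fin_ne (l : Nat.Partition (t + 1)) : l.parts.toFinset.Nonempty := by
  rw [Multiset.toFinset_nonempty]
  intro h
  have := l.parts_sum
  rw [h] at this
  simp at this

def maxp (l : Nat.Partition (t + 1)) : ℕ := l.parts.toFinset.max' (parts_fin_ne l)

lemma maxp_mem (l : Nat.Partition (t + 1)) : maxp l ∈ l.parts :=
  Multiset.mem_toFinset.1 (l.parts.toFinset.max'_mem _)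

lemma maxp_ge (l : Nat.Partition (t + 1)) {x : ℕ} (hx : x ∈ l.parts) : x ≤ maxp l :=
  l.parts.toFinset.le_max' x (Multiset.mem_toFinset.2 hx)

lemma maxp_pos (l : Nat.Partition (t + 1)) : 1 ≤ maxp l := l.parts_pos (maxp_mem l)

lemma maxp_le (l : Nat.Partition (t + 1)) : maxp l ≤ t + 1 := by
  have := Multiset.le_sum_of_mem (maxp_mem l)
  rw [l.parts_sum] at this
  exact this

lemma sum_erase_max (l : Nat.Partition (t + 1)) :
    (l.parts.erase (maxp l)).sum + maxp l = t + 1 := by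
  have := l.parts_sum
  rw [← Multiset.cons_erase (maxp_mem l), Multiset.sum_cons] at this
  omega

/-- if max part is 1, everything is 1 -/
lemma parts_eq_ones (l : Nat.Partition (t + 1)) (h : maxp l = 1) :
    l.parts = replicate (t + 1) 1 := by
  have hall : ∀ x ∈ l.parts, x = 1 := fun x hx =>
    le_antisymm (h ▸ maxp_ge l hx) (l.parts_pos hx)
  have hc : l.parts = replicate (Multiset.card l.parts) 1 :=
    Multiset.eq_replicate_card.2 hall
  have hs := l.parts_sum
  rw [hc, Multiset.sum_replicate, smul_eq_mul, mul_one] at hs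
  rw [hc, hs]

def H : Nat.Partition (t + 1) ⊕ {μ : Nat.Partition t // μ ≠ onesP t} →
    Σ m : Fin (t + 1), Nat.Partition (m : ℕ)
  | Sum.inl l => ⟨⟨t + 1 - maxp l, by have := maxp_pos l; omega⟩,
      ⟨l.parts.erase (maxp l),
        fun hx => l.parts_pos (Multiset.mem_of_mem_erase hx),
        by
          show (l.parts.erase (maxp l)).sum = t + 1 - maxp l
          have := sum_erase_max l
          omega⟩⟩
  | Sum.inr μ => ⟨⟨t, Nat.lt_succ_self t⟩, μ.1⟩

lemma sigEq {x y : Σ m : Fin (t + 1), Nat.Partition (m : ℕ)} (h : x = y) :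
    (x.1 : ℕ) = (y.1 : ℕ) ∧ x.2.parts = y.2.parts := by
  subst h; exact ⟨rfl, rfl⟩

lemma H_inj : Function.Injective (H (t := t)) := by
  intro a b h
  rcases a with l | μ <;> rcases b with l' | μ'
  · obtain ⟨h1, h2⟩ := sigEq h
    have e1 : maxp l ≤ t + 1 := maxp_le l
    have e2 : maxp l' ≤ t + 1 := maxp_le l'
    have e3 : maxp l = maxp l' := by
      simp only [H] at h1
      omega
    simp only [H] at h2
    congr 1
    refine Nat.Partition.ext ?_
    rw [← Multiset.cons_erase (maxp_mem l), ← Multiset.cons_erase (maxp_mem l'), e3]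
    congr 1
    rw [e3] at h2
    exact h2
  · obtain ⟨h1, h2⟩ := sigEq h
    simp only [H] at h1 h2
    have e1 : maxp l ≤ t + 1 := maxp_le l
    have e2 : 1 ≤ maxp l := maxp_pos l
    have e3 : maxp l = 1 := by omega
    rw [e3, parts_eq_ones l e3] at h2
    rw [show ((t:ℕ) + 1) = t.succ from rfl, Multiset.replicate_succ,
      Multiset.erase_cons_head] at h2
    exact absurd (Nat.Partition.ext h2.symm : (μ' : Nat.Partition t) = onesP t) μ'.2
  · obtain ⟨h1, h2⟩ := sigEq h
    simp only [H] at h1 h2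
    have e1 : maxp l' ≤ t + 1 := maxp_le l'
    have e2 : 1 ≤ maxp l' := maxp_pos l'
    have e3 : maxp l' = 1 := by omega
    rw [e3, parts_eq_ones l' e3] at h2
    rw [show ((t:ℕ) + 1) = t.succ from rfl, Multiset.replicate_succ,
      Multiset.erase_cons_head] at h2
    exact absurd (Nat.Partition.ext h2 : (μ : Nat.Partition t) = onesP t) μ.2
  · obtain ⟨-, h2⟩ := sigEq h
    simp only [H] at h2
    exact congrArg Sum.inr (Subtype.ext (Nat.Partition.ext h2))

end MPaux2

lemma pp_pos (n : ℕ) : 0 < pp n := Fintype.card_pos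

lemma lemB (t : ℕ) : pp (t + 1) + pp t ≤ (∑ m ∈ Finset.range (t + 1), pp m) + 1 := by
  have hinj := Fintype.card_le_of_injective MPaux2.H (MPaux2.H_inj (t := t))
  rw [Fintype.card_sum, Fintype.card_sigma] at hinj
  have hsub : Fintype.card {μ : Nat.Partition t // μ ≠ onesP t} = pp t - 1 :=
    Set.card_ne_eq _
  rw [hsub] at hinj
  have hfin : ∑ m : Fin (t + 1), Fintype.card (Nat.Partition (m : ℕ))
      = ∑ m ∈ Finset.range (t + 1), pp m := by
    rw [← Fin.sum_univ_eq_sum_range (fun m => pp m) (t + 1)]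
    rfl
  rw [hfin] at hinj
  have := pp_pos t
  simp only [pp] at *
  omega

lemma lemC (t : ℕ) (ht : 2 ≤ t) : pp (t - 1) + 1 ≤ pp t := by
  have hne : t ≠ 0 := by omega
  set G : Nat.Partition (t - 1) → Nat.Partition t := fun μ =>
    ⟨1 ::ₘ μ.parts,
      fun hx => by
        rcases Multiset.mem_cons.1 hx with h | h
        · omega
        · exact μ.parts_pos h,
      by rw [Multiset.sum_cons, μ.parts_sum]; omega⟩ with hG
  have hGinj : Function.Injective G := by
    intro a b h
    have := congrArg Nat.Partition.parts h
    simp only [hG] at this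
    exact Nat.Partition.ext ((Multiset.cons_inj_right _).1 this)
  have hmiss : Nat.Partition.indiscrete t ∉ Set.range G := by
    rintro ⟨μ, hμ⟩
    have := congrArg Nat.Partition.parts hμ
    simp only [hG, Nat.Partition.indiscrete_parts hne] at this
    have h1 : (1:ℕ) ∈ ({t} : Multiset ℕ) := by
      rw [← this]; exact Multiset.mem_cons_self _ _
    rw [Multiset.mem_singleton] at h1
    omega
  exact Fintype.card_lt_of_injective_of_notMem G hGinj hmiss


lemma multipartitions_two (m : ℕ) :
    multipartitions 2 m = ∑ j ∈ Finset.range (m + 1), pp j * pp (m - j) := by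
  rw [multipartitions, Nat.card_congr (mpEquiv m), Nat.card_eq_fintype_card,
    Fintype.card_sigma]
  rw [← Fin.sum_univ_eq_sum_range (fun j => pp j * pp (m - j)) (m + 1)]
  exact Finset.sum_congr rfl fun i _ => Fintype.card_prod _ _

lemma pp_zero : pp 0 = 1 := Fintype.card_unique


theorem multipartitions_two_succ_le (t : ℕ) (ht : 2 ≤ t) :
    multipartitions 2 (t + 1) ≤ 2 * multipartitions 2 t := by
  rw [multipartitions_two, multipartitions_two, Finset.mul_sum]
  have hsplit : ∑ j ∈ Finset.range (t + 1 + 1), pp j * pp (t + 1 - j)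
      = (∑ i ∈ Finset.range (t + 1), pp (i + 1) * pp (t - i)) + pp (t + 1) := by
    rw [Finset.sum_range_succ']
    simp only [Nat.succ_sub_succ, Nat.sub_zero, pp_zero, one_mul]
  rw [hsplit]
  have hsum1 : ∑ i ∈ Finset.range (t + 1), pp (t - i) = ∑ m ∈ Finset.range (t + 1), pp m := by
    rw [← Finset.sum_range_reflect (fun m => pp m) (t + 1)]
    refine Finset.sum_congr rfl fun i hi => ?_
    have h3 : t + 1 - 1 - i = t - i := by omega
    rw [h3]
  have h2 : ∑ i ∈ Finset.range (t + 1), (if i = 1 then pp (t - 1) else 0) = pp (t - 1) := by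
    rw [Finset.sum_ite_eq' (Finset.range (t + 1)) 1 (fun _ => pp (t - 1)),
      if_pos (Finset.mem_range.2 (by omega))]
  have hsplit2 : ∑ i ∈ Finset.range (t + 1), pp (t - i)
      = (∑ i ∈ Finset.range (t + 1), (if i = 1 then 0 else pp (t - i))) + pp (t - 1) := by
    have h1 : ∑ i ∈ Finset.range (t + 1), pp (t - i)
        = ∑ i ∈ Finset.range (t + 1),
            ((if i = 1 then 0 else pp (t - i)) + (if i = 1 then pp (t - 1) else 0)) := by
      refine Finset.sum_congr rfl fun i _ => ?_
      by_cases h : i = 1 <;> simp [h]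
    rw [h1, Finset.sum_add_distrib, h2]
  have hE : pp (t + 1) ≤ ∑ i ∈ Finset.range (t + 1), (if i = 1 then 0 else pp (t - i)) := by
    have hb := lemB t
    have hc := lemC t ht
    omega
  have hterm : ∀ i ∈ Finset.range (t + 1),
      pp (i + 1) * pp (t - i) + (if i = 1 then 0 else pp (t - i))
        ≤ 2 * (pp i * pp (t - i)) := by
    intro i _
    by_cases h : i = 1
    · subst h
      simp only [if_pos rfl, add_zero, ← mul_assoc]
      exact mul_le_mul_left (pp_succ_le 1) _
    · rw [if_neg h]
      have h1 : (pp (i + 1) + 1) * pp (t - i) ≤ (2 * pp i) * pp (t - i) :=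
        mul_le_mul_left (pp_succ_lt i h) _
      rw [add_one_mul] at h1
      rw [← mul_assoc]
      exact h1
  calc (∑ i ∈ Finset.range (t + 1), pp (i + 1) * pp (t - i)) + pp (t + 1)
      ≤ (∑ i ∈ Finset.range (t + 1), pp (i + 1) * pp (t - i))
        + ∑ i ∈ Finset.range (t + 1), (if i = 1 then 0 else pp (t - i)) :=
        Nat.add_le_add_left hE _
    _ = ∑ i ∈ Finset.range (t + 1),
          (pp (i + 1) * pp (t - i) + (if i = 1 then 0 else pp (t - i))) := by
        rw [Finset.sum_add_distrib]
    _ ≤ ∑ i ∈ Finset.range (t + 1), 2 * (pp i * pp (t - i)) := Finset.sum_le_sum hterm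
end

section
/- For every integer w ≥ 0, the number of 2-multipartitions satisfies k(2, w) ≤ 2^(w + 0.35). -/
theorem Multiset.sum_map_sub_one_add_card {s : Multiset ℕ} (hs : ∀ x ∈ s, 0 < x) :
    (s.map (· - 1)).sum + card s = s.sum := by
  induction s using Multiset.induction with
  | empty => simp
  | cons a s ih =>
    simp only [mem_cons, forall_eq_or_imp] at hs
    simp only [map_cons, sum_cons, card_cons]
    have := ih hs.2
    omega

theorem Multiset.map_add_one_map_sub_one {s : Multiset ℕ} (hs : ∀ x ∈ s, 0 < x) :
    (s.map (· - 1)).map (· + 1) = s := by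
  rw [map_map]
  exact (map_congr rfl fun x hx => Nat.sub_add_cancel (hs x hx)).trans (map_id s)

namespace Nat.Partition

open Multiset

theorem eq_indiscrete_of_card_parts_le_one {m : ℕ} (hm : m ≠ 0) {μ : m.Partition}
    (h : card μ.parts ≤ 1) : μ = indiscrete m := by
  ext1
  rw [indiscrete_parts hm]
  obtain h0 | h1 := Nat.le_one_iff_eq_zero_or_eq_one.mp h
  · have := μ.parts_sum
    rw [Multiset.card_eq_zero.mp h0, sum_zero] at this
    omega
  · obtain ⟨a, ha⟩ := card_eq_one.mp h1
    have := μ.parts_sum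
    rw [ha, sum_singleton] at this
    rw [ha, this]

/-- The image of a partition with `k ≥ 2` parts has `2k - 2` parts, which recovers `k`; this makes
the map injective. -/
def lowerParts {n : ℕ} (μ : {μ : (n + 2).Partition // 1 ∉ μ.parts}) : n.Partition :=
  if hk : 2 ≤ card μ.1.parts then
    { parts := μ.1.parts.map (· - 1) + replicate (card μ.1.parts - 2) 1
      parts_pos := by
        intro i hi
        rcases mem_add.mp hi with hi | hi
        · obtain ⟨x, hx, rfl⟩ := mem_map.mp hi
          have := μ.1.parts_pos hx
          have : x ≠ 1 := fun h => μ.2 (h ▸ hx)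
          omega
        · rw [eq_of_mem_replicate hi]
          exact one_pos
      parts_sum := by
        have := sum_map_sub_one_add_card fun _ => μ.1.parts_pos
        rw [μ.1.parts_sum] at this
        rw [sum_add, sum_replicate, smul_eq_mul, mul_one]
        omega }
  else indiscrete n

theorem card_parts_indiscrete_le_one (n : ℕ) : card (indiscrete n).parts ≤ 1 :=
  (card_le_card (filter_le _ {n})).trans_eq (card_singleton n)

theorem lowerParts_injective {n : ℕ} : Function.Injective (lowerParts (n := n)) := by
  intro μ ν h
  have hparts := congrArg parts h
  have hindiscrete := card_parts_indiscrete_le_one n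
  unfold lowerParts at hparts
  split_ifs at hparts with hμ hν hν
  · dsimp only at hparts
    have hk : card μ.1.parts = card ν.1.parts := by
      have := congrArg card hparts
      simp only [card_add, card_map, card_replicate] at this
      omega
    rw [hk, add_left_inj] at hparts
    refine Subtype.ext (Partition.ext ?_)
    rw [← map_add_one_map_sub_one fun _ => μ.1.parts_pos,
      ← map_add_one_map_sub_one fun _ => ν.1.parts_pos, hparts]
  · have := congrArg card hparts
    simp only [card_add, card_map, card_replicate] at this
    omega
  · have := congrArg card hparts
    simp only [card_add, card_map, card_replicate] at this
    omega
  · exact Subtype.ext ((eq_indiscrete_of_card_parts_le_one (by omega) (by omega)).trans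
      (eq_indiscrete_of_card_parts_le_one (by omega) (by omega)).symm)

theorem card_add_two_le (n : ℕ) :
    Fintype.card (n + 2).Partition ≤ Fintype.card (n + 1).Partition + Fintype.card n.Partition := by
  classical
  have hsplit := Fintype.card_congr (Equiv.sumCompl fun μ : (n + 2).Partition => 1 ∈ μ.parts)
  rw [Fintype.card_sum] at hsplit
  rw [← hsplit, Fintype.card_congr (partitionWithPartEquiv le_rfl (by omega))]
  exact Nat.add_le_add_left (Fintype.card_le_of_injective _ lowerParts_injective) _

theorem card_le_fib (n : ℕ) : Fintype.card n.Partition ≤ fib (n + 1) := by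
  induction n using Nat.twoStepInduction with
  | zero => simp
  | one => simp
  | more n ih₀ ih₁ =>
    calc Fintype.card (n + 2).Partition
        ≤ Fintype.card (n + 1).Partition + Fintype.card n.Partition := card_add_two_le n
      _ ≤ fib (n + 2) + fib (n + 1) := Nat.add_le_add ih₁ ih₀
      _ = fib (n + 3) := by rw [fib_add_two (n := n + 1), add_comm]

end Nat.Partition

open Finset

def multipartitionsTwoEquiv (w : ℕ) :
    {f : Fin 2 → Σ n : ℕ, Nat.Partition n // ∑ i, (f i).1 = w} ≃
      Σ x : antidiagonal w, x.1.1.Partition × x.1.2.Partition where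
  toFun f := ⟨⟨((f.1 0).1, (f.1 1).1), by simpa [Fin.sum_univ_two] using f.2⟩, (f.1 0).2, (f.1 1).2⟩
  invFun x := ⟨![⟨_, x.2.1⟩, ⟨_, x.2.2⟩], by
    simpa [Fin.sum_univ_two] using mem_antidiagonal.mp x.1.2⟩
  left_inv f := by
    ext i : 2
    fin_cases i <;> rfl
  right_inv x := rfl

theorem multipartitions_two_eq_sum (w : ℕ) :
    multipartitions 2 w =
      ∑ x ∈ antidiagonal w, Fintype.card x.1.Partition * Fintype.card x.2.Partition := by
  rw [multipartitions, Nat.card_congr (multipartitionsTwoEquiv w), Nat.card_eq_fintype_card,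
    Fintype.card_sigma]
  simp only [Fintype.card_prod]
  exact sum_coe_sort (antidiagonal w) fun x =>
    Fintype.card x.1.Partition * Fintype.card x.2.Partition

theorem Nat.fib_succ_mul_fib_succ_le {a b : ℕ} :
    fib (a + 1) * fib (b + 1) ≤ fib (a + b + 1) := by
  rw [fib_add]
  exact Nat.le_add_left _ _

theorem Nat.three_mul_fib_add_two_le (n : ℕ) (hn : 2 ≤ n) : 3 * fib (n + 2) ≤ 5 * fib (n + 1) := by
  obtain ⟨k, rfl⟩ := Nat.exists_eq_add_of_le' hn
  have h₂ : fib (k + 2) = fib k + fib (k + 1) := fib_add_two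
  have h₃ : fib (k + 3) = fib (k + 1) + fib (k + 2) := fib_add_two
  have h₄ : fib (k + 4) = fib (k + 2) + fib (k + 3) := fib_add_two
  have := fib_le_fib_succ (n := k)
  show 3 * fib (k + 4) ≤ 5 * fib (k + 3)
  omega

theorem four_mul_succ_mul_fib_le (w : ℕ) (hw : 8 ≤ w) :
    4 * ((w + 1) * Nat.fib (w + 1)) ≤ 5 * 2 ^ w := by
  induction w, hw using Nat.le_induction with
  | base => decide
  | succ w hw ih =>
    have hfib := Nat.three_mul_fib_add_two_le w (by omega)
    have hstep : (w + 2) * Nat.fib (w + 2) ≤ 2 * ((w + 1) * Nat.fib (w + 1)) := by nlinarith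
    rw [pow_succ]
    linarith

theorem sum_antidiagonal_fib_mul_fib_le (w : ℕ) :
    4 * ∑ x ∈ antidiagonal w, Nat.fib (x.1 + 1) * Nat.fib (x.2 + 1) ≤ 5 * 2 ^ w := by
  rcases le_or_gt w 7 with hw | hw
  · interval_cases w <;> decide
  calc 4 * ∑ x ∈ antidiagonal w, Nat.fib (x.1 + 1) * Nat.fib (x.2 + 1)
      ≤ 4 * ∑ _x ∈ antidiagonal w, Nat.fib (w + 1) := by
        gcongr with x hx
        rw [← mem_antidiagonal.mp hx]
        exact Nat.fib_succ_mul_fib_succ_le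
    _ = 4 * ((w + 1) * Nat.fib (w + 1)) := by rw [sum_const, Nat.card_antidiagonal, smul_eq_mul]
    _ ≤ 5 * 2 ^ w := four_mul_succ_mul_fib_le w hw

theorem four_mul_multipartitions_two_le (w : ℕ) : 4 * multipartitions 2 w ≤ 5 * 2 ^ w := by
  refine le_trans ?_ (sum_antidiagonal_fib_mul_fib_le w)
  rw [multipartitions_two_eq_sum]
  gcongr with x
  · exact Nat.Partition.card_le_fib _
  · exact Nat.Partition.card_le_fib _

theorem five_div_four_le_two_rpow : (5 / 4 : ℝ) ≤ 2 ^ (0.35 : ℝ) := by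
  refine le_of_pow_le_pow_left₀ (n := 20) (by norm_num) (by positivity) ?_
  rw [← Real.rpow_mul_natCast zero_le_two]
  norm_num

theorem multipartitions_two_le (w : ℕ) :
    (multipartitions 2 w : ℝ) ≤ (2 : ℝ) ^ ((w : ℝ) + 0.35) := by
  have hnat : (4 * multipartitions 2 w : ℝ) ≤ 5 * 2 ^ w := by
    exact_mod_cast four_mul_multipartitions_two_le w
  calc (multipartitions 2 w : ℝ) ≤ 5 / 4 * 2 ^ w := by linarith
    _ ≤ 2 ^ (0.35 : ℝ) * 2 ^ w := by gcongr; exact five_div_four_le_two_rpow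
    _ = 2 ^ ((w : ℝ) + 0.35) := by rw [Real.rpow_add two_pos, Real.rpow_natCast, mul_comm]
end

section
/- For all integers c ≥ 3, x ≥ 1 and w ≥ 0, if k(c, i) ≤ c^i for all i ≤ w, then k(cx, w) ≤ C(x+w−1, w) · c^w, where C denotes the binomial coefficient. -/
/-- For `κ = Fin x` these are the `x`-splits of `w`. -/
abbrev WeakComposition (κ : Type*) [Fintype κ] (w : ℕ) : Type _ := {g : κ → ℕ // ∑ j, g j = w}

abbrev TuplesOfSize {β : Type*} (size : β → ℕ) (κ : Type*) [Fintype κ] (w : ℕ) : Type _ :=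
  {f : κ → β // ∑ j, size (f j) = w}

namespace WeakComposition

variable {κ : Type*} [Fintype κ] {w : ℕ}

noncomputable instance : Fintype (WeakComposition κ w) := by
  classical
  exact Fintype.ofEquiv _ (Sym.equivNatSumOfFintype κ w)

variable (κ w) in
theorem card_eq_choose : Fintype.card (WeakComposition κ w) = (Fintype.card κ + w - 1).choose w := by
  classical
  rw [← Fintype.card_congr (Sym.equivNatSumOfFintype κ w), Sym.card_sym_eq_choose]

theorem apply_le (g : WeakComposition κ w) (j : κ) : g.1 j ≤ w :=
  (Finset.single_le_sum (fun j _ => Nat.zero_le (g.1 j)) (Finset.mem_univ j)).trans_eq g.2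

theorem prod_le_pow {a : ℕ → ℕ} {c : ℕ} (ha : ∀ i ≤ w, a i ≤ c ^ i)
    (g : WeakComposition κ w) : ∏ j, a (g.1 j) ≤ c ^ w :=
  calc ∏ j, a (g.1 j) ≤ ∏ j, c ^ g.1 j :=
        Finset.prod_le_prod' fun j _ => ha _ (g.apply_le j)
    _ = c ^ w := by rw [Finset.prod_pow_eq_pow_sum, g.2]

end WeakComposition

namespace TuplesOfSize

variable {β : Type*} (size : β → ℕ) {κ : Type*} [Fintype κ] (w : ℕ)

def equivSigmaWeakComposition :
    TuplesOfSize size κ w ≃ Σ g : WeakComposition κ w, ∀ j, {b : β // size b = g.1 j} where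
  toFun f := ⟨⟨fun j => size (f.1 j), f.2⟩, fun j => ⟨f.1 j, rfl⟩⟩
  invFun p := ⟨fun j => (p.2 j).1, by simp only [(p.2 _).2, p.1.2]⟩
  left_inv _ := rfl
  right_inv := by
    rintro ⟨⟨g, hg⟩, φ⟩
    obtain ⟨φ, hφ, rfl⟩ : ∃ (φ' : κ → β) (hφ : ∀ j, size (φ' j) = g j),
        φ = fun j => ⟨φ' j, hφ j⟩ := ⟨fun j => (φ j).1, fun j => (φ j).2, rfl⟩
    obtain rfl : (fun j => size (φ j)) = g := funext hφ
    rfl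

instance [∀ n, Finite {b : β // size b = n}] : Finite (TuplesOfSize size κ w) :=
  Finite.of_equiv _ (equivSigmaWeakComposition size w).symm

theorem card_eq_sum_prod [∀ n, Finite {b : β // size b = n}] :
    Nat.card (TuplesOfSize size κ w) =
      ∑ g : WeakComposition κ w, ∏ j, Nat.card {b : β // size b = g.1 j} := by
  rw [Nat.card_congr (equivSigmaWeakComposition size w), Nat.card_sigma]
  simp only [Nat.card_pi]

def equivCurry {ι τ : Type*} [Fintype ι] [Fintype τ] (e : ι × κ ≃ τ) :
    TuplesOfSize size τ w ≃ TuplesOfSize (fun φ : ι → β => ∑ i, size (φ i)) κ w :=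
  Equiv.subtypeEquiv ((((Equiv.prodComm κ ι).trans e).arrowCongr (Equiv.refl β)).symm.trans
    (Equiv.curry κ ι β)) fun f => by
      rw [← Fintype.sum_equiv ((Equiv.prodComm κ ι).trans e) (fun p => size (f (e p.swap))) _
        fun _ => rfl, Fintype.sum_prod_type]
      rfl

end TuplesOfSize

instance (n : ℕ) : Finite {b : Σ m, Nat.Partition m // b.1 = n} :=
  Finite.of_equiv _ (Equiv.sigmaSubtype n).symm

theorem multipartitions_mul_le_general (c x w : ℕ)
    (h : ∀ i ≤ w, multipartitions c i ≤ c ^ i) :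
    multipartitions (c * x) w ≤ (x + w - 1).choose w * c ^ w :=
  calc multipartitions (c * x) w
      = Nat.card (TuplesOfSize (fun φ : Fin c → Σ n, Nat.Partition n => ∑ i, (φ i).1) (Fin x) w) :=
        Nat.card_congr (TuplesOfSize.equivCurry _ w finProdFinEquiv)
    _ = ∑ g : WeakComposition (Fin x) w, ∏ j, multipartitions c (g.1 j) :=
        TuplesOfSize.card_eq_sum_prod _ w
    _ ≤ ∑ _g : WeakComposition (Fin x) w, c ^ w :=
        Finset.sum_le_sum fun g _ => g.prod_le_pow h
    _ = (x + w - 1).choose w * c ^ w := by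
        rw [Finset.sum_const, Finset.card_univ, WeakComposition.card_eq_choose, Fintype.card_fin,
          smul_eq_mul]

theorem multipartitions_mul_le (c x w : ℕ) (hc : 3 ≤ c) (hx : 1 ≤ x)
    (h : ∀ i ≤ w, multipartitions c i ≤ c ^ i) :
    multipartitions (c * x) w ≤ (x + w - 1).choose w * c ^ w :=
  multipartitions_mul_le_general c x w h
end

section
/- For every integer a ≥ 3 and every integer w ≥ 0, the number of 2^a-multipartitions satisfies k(2^a, w) ≤ 2^((a − 4/3)w + 3). -/
open Finset

theorem card_subtype_add_eq_sum_antidiagonal {A B : Type*} (σ : A → ℕ) (τ : B → ℕ)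
    [∀ n, Finite {a // σ a = n}] [∀ n, Finite {b // τ b = n}] (w : ℕ) :
    Nat.card {x : A × B // σ x.1 + τ x.2 = w} =
      ∑ p ∈ antidiagonal w, Nat.card {a // σ a = p.1} * Nat.card {b // τ b = p.2} := by
  let e : {x : A × B // σ x.1 + τ x.2 = w} ≃
      Σ p : antidiagonal w, {a // σ a = p.1.1} × {b // τ b = p.1.2} :=
    { toFun x := ⟨⟨(σ x.1.1, τ x.1.2), mem_antidiagonal.2 x.2⟩, ⟨x.1.1, rfl⟩, ⟨x.1.2, rfl⟩⟩
      invFun y := ⟨(y.2.1, y.2.2), by rw [y.2.1.2, y.2.2.2]; exact mem_antidiagonal.1 y.1.2⟩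
      left_inv _ := rfl
      right_inv := by
        rintro ⟨⟨⟨i, j⟩, h⟩, ⟨a, ha⟩, ⟨b, hb⟩⟩
        dsimp only at ha hb
        subst ha hb
        rfl }
  rw [Nat.card_congr e, Nat.card_sigma]
  simp only [Nat.card_prod]
  exact sum_coe_sort (antidiagonal w) fun p => Nat.card {a // σ a = p.1} * Nat.card {b // τ b = p.2}

abbrev Multipartition (s w : ℕ) := {f : Fin s → Σ n : ℕ, Nat.Partition n // ∑ i, (f i).1 = w}

instance (s w : ℕ) : Finite (Multipartition s w) := by
  have hsize : {x : Σ n, Nat.Partition n | x.1 ≤ w}.Finite := by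
    refine (Set.finite_Iic w).preimage' fun n _ => ?_
    have : Finite {x : Σ n, Nat.Partition n // x.1 = n} := .of_equiv _ (Equiv.sigmaSubtype n).symm
    exact Set.finite_coe_iff.mp this
  refine ((Set.Finite.pi fun _ => hsize).subset fun f hf i _ => ?_).to_subtype
  exact (single_le_sum (f := fun i => (f i).1) (fun _ _ => Nat.zero_le _) (mem_univ i)).trans_eq hf

theorem multipartitions_add (s t w : ℕ) :
    multipartitions (s + t) w =
      ∑ p ∈ antidiagonal w, multipartitions s p.1 * multipartitions t p.2 := by
  have e : Multipartition (s + t) w ≃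
      {x : (Fin s → Σ n, Nat.Partition n) × (Fin t → Σ n, Nat.Partition n) //
        ∑ i, (x.1 i).1 + ∑ i, (x.2 i).1 = w} :=
    (Fin.appendEquiv s t).symm.subtypeEquiv fun f => by simp [Fin.sum_univ_add]
  rw [multipartitions, Nat.card_congr e]
  exact card_subtype_add_eq_sum_antidiagonal (fun g : Fin s → Σ n, Nat.Partition n => ∑ i, (g i).1)
    (fun g : Fin t → Σ n, Nat.Partition n => ∑ i, (g i).1) w

theorem multipartitions_one (w : ℕ) : multipartitions 1 w = Fintype.card (Nat.Partition w) := by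
  rw [← Nat.card_eq_fintype_card, multipartitions]
  refine Nat.card_congr (((Equiv.funUnique (Fin 1) _).subtypeEquiv fun f => ?_).trans
    (Equiv.sigmaSubtype w))
  simp

def partCandidates (n : ℕ) : Multiset ℕ := ∑ k ∈ Icc 1 n, Multiset.replicate (n / k) k

theorem Nat.Partition.parts_le_partCandidates {n : ℕ} (P : n.Partition) :
    P.parts ≤ partCandidates n := by
  refine Multiset.le_iff_count.2 fun a => ?_
  simp only [partCandidates, Multiset.count_sum', Multiset.count_replicate, sum_ite_eq', mem_Icc]
  split_ifs with ha
  · obtain ⟨u, hu⟩ := Multiset.le_iff_exists_add.1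
      (Multiset.le_count_iff_replicate_le.1 (le_refl (P.parts.count a)))
    have hsum := P.parts_sum
    rw [hu, Multiset.sum_add, Multiset.sum_replicate, smul_eq_mul] at hsum
    exact (Nat.le_div_iff_mul_le (by omega)).2 (by omega)
  · exact (Multiset.count_eq_zero.2 fun hmem => ha ⟨P.parts_pos hmem, P.le_of_mem_parts hmem⟩).le

theorem card_partition_le_card_filter_powerset (n : ℕ) :
    Fintype.card n.Partition ≤
      ((partCandidates n).powerset.filter (·.sum = n)).toFinset.card := by
  rw [← card_univ, ← card_image_of_injective _ fun P Q => Nat.Partition.ext]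
  refine card_le_card fun m hm => ?_
  obtain ⟨P, -, rfl⟩ := mem_image.1 hm
  simp [P.parts_le_partCandidates, P.parts_sum]

theorem card_partition_le_two_pow (n : ℕ) : Fintype.card n.Partition ≤ 2 ^ (n - 1) :=
  (Fintype.card_le_of_surjective _ Nat.Partition.ofComposition_surj).trans_eq (composition_card n)

/-- Exact partition numbers below 6, where `2 ^ (n - 1)` would be too weak; the length 58 is where
the crude estimate in `multipartitions_eight_cube_le` takes over. -/
def partitionTable : List ℕ := (List.range 58).map fun n =>
  if n < 6 then ((partCandidates n).powerset.filter (·.sum = n)).toFinset.card else 2 ^ (n - 1)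

theorem card_partition_le_getD_partitionTable {n : ℕ} (hn : n < partitionTable.length) :
    Fintype.card n.Partition ≤ partitionTable.getD n 0 := by
  simp only [partitionTable, List.length_map, List.length_range] at hn
  simp only [partitionTable, List.getD_eq_getElem?_getD, List.getElem?_map, List.getElem?_range hn,
    Option.map_some, Option.getD_some]
  split_ifs
  · exact card_partition_le_card_filter_powerset n
  · exact card_partition_le_two_pow n

theorem multipartitions_add_le {R : Type*} [CommSemiring R] [PartialOrder R] [IsOrderedRing R]
    {s t w : ℕ} {f g : ℕ → R} (hf : ∀ j ≤ w, (multipartitions s j : R) ≤ f j)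
    (hg : ∀ j ≤ w, (multipartitions t j : R) ≤ g j) :
    (multipartitions (s + t) w : R) ≤ ∑ p ∈ antidiagonal w, f p.1 * g p.2 := by
  rw [multipartitions_add]
  push_cast
  refine sum_le_sum fun p hp => ?_
  have hp := mem_antidiagonal.1 hp
  exact mul_le_mul (hf _ (by omega)) (hg _ (by omega)) (Nat.cast_nonneg _)
    ((Nat.cast_nonneg _).trans (hf _ (by omega)))

theorem multipartitions_one_le_two_pow (w : ℕ) : multipartitions 1 w ≤ 2 ^ w := by
  rw [multipartitions_one]
  exact (card_partition_le_two_pow w).trans (Nat.pow_le_pow_right two_pos (Nat.sub_le w 1))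

theorem multipartitions_succ_le (s w : ℕ) : multipartitions (s + 1) w ≤ 2 ^ w * (w + 1) ^ s := by
  induction s generalizing w with
  | zero => simpa using multipartitions_one_le_two_pow w
  | succ s ih =>
    calc multipartitions (s + 1 + 1) w
        ≤ ∑ p ∈ antidiagonal w, 2 ^ p.1 * (p.1 + 1) ^ s * 2 ^ p.2 :=
          multipartitions_add_le (R := ℕ) (fun j _ => ih j) fun j _ => multipartitions_one_le_two_pow j
      _ ≤ ∑ _p ∈ antidiagonal w, 2 ^ w * (w + 1) ^ s := sum_le_sum fun p hp => by
          rw [← mem_antidiagonal.1 hp, pow_add, mul_right_comm]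
          gcongr
          omega
      _ = 2 ^ w * (w + 1) ^ (s + 1) := by
          rw [sum_const, Nat.card_antidiagonal, smul_eq_mul]; ring

def convList (u v : List ℕ) : List ℕ :=
  (List.range (min u.length v.length)).map fun w =>
    ∑ p ∈ antidiagonal w, u.getD p.1 0 * v.getD p.2 0

@[simp]
theorem length_convList (u v : List ℕ) : (convList u v).length = min u.length v.length := by
  simp [convList]

theorem getD_convList {u v : List ℕ} {w : ℕ} (hw : w < min u.length v.length) :
    (convList u v).getD w 0 = ∑ p ∈ antidiagonal w, u.getD p.1 0 * v.getD p.2 0 := by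
  simp [convList, List.getD_eq_getElem?_getD, List.getElem?_range hw]

theorem multipartitions_add_le_getD_convList {s t : ℕ} {u v : List ℕ}
    (hu : ∀ j < u.length, multipartitions s j ≤ u.getD j 0)
    (hv : ∀ j < v.length, multipartitions t j ≤ v.getD j 0) {w : ℕ} (hw : w < min u.length v.length) :
    multipartitions (s + t) w ≤ (convList u v).getD w 0 := by
  rw [getD_convList hw]
  rw [lt_min_iff] at hw
  exact multipartitions_add_le (R := ℕ) (fun j hj => hu j (by omega)) fun j hj => hv j (by omega)

theorem multipartitions_two_pow_le_getD_iterate {u : List ℕ}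
    (hu : ∀ j < u.length, multipartitions 1 j ≤ u.getD j 0) (a : ℕ) :
    ∀ w < u.length, multipartitions (2 ^ a) w ≤ ((fun v => convList v v)^[a] u).getD w 0 := by
  have hlen (a : ℕ) : ((fun v => convList v v)^[a] u).length = u.length := by
    induction a with
    | zero => rfl
    | succ a iha => simp [Function.iterate_succ_apply', iha]
  induction a with
  | zero => simpa using hu
  | succ a ih =>
    intro w hw
    rw [Function.iterate_succ_apply', pow_succ, mul_two]
    exact multipartitions_add_le_getD_convList (by rwa [hlen]) (by rwa [hlen])
      (by rwa [hlen, min_self])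

def multipartitionTable8 : List ℕ := (fun v => convList v v)^[3] partitionTable

def envelope (w : ℕ) : ℕ := min 8 (3 ^ w)

theorem envelope_of_two_le {w : ℕ} (hw : 2 ≤ w) : envelope w = 8 :=
  min_eq_left (le_trans (by norm_num) (Nat.pow_le_pow_right three_pos hw))

theorem multipartitionTable8_cube_le :
    ∀ w < 58, multipartitionTable8.getD w 0 ^ 3 ≤ envelope w ^ 3 * 32 ^ w := by
  decide +kernel

theorem sum_antidiagonal_envelope_mul_le (w : ℕ) :
    ∑ p ∈ antidiagonal w, envelope p.1 * envelope p.2 ≤ 2 ^ w * envelope w := by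
  obtain hw | hw := lt_or_ge w 6
  · interval_cases w <;> decide
  · obtain ⟨v, rfl⟩ := Nat.exists_eq_add_of_le' hw
    have hv : v + 1 ≤ 2 ^ v := Nat.lt_two_pow_self
    calc ∑ p ∈ antidiagonal (v + 6), envelope p.1 * envelope p.2
        ≤ ∑ _p ∈ antidiagonal (v + 6), 8 * 8 :=
          sum_le_sum fun _ _ => Nat.mul_le_mul (min_le_left _ _) (min_le_left _ _)
      _ ≤ 2 ^ (v + 6) * 8 := by
          rw [sum_const, Nat.card_antidiagonal, smul_eq_mul, pow_add]; omega
      _ = 2 ^ (v + 6) * envelope (v + 6) := by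
          rw [envelope_of_two_le (by omega)]

/-- For `m ≥ 31`, `(m + 1) ^ 21 ≤ (32 / 31) ^ 21 * m ^ 21 < 4 * m ^ 21`. -/
theorem pow_twentyOne_le_two_pow {m : ℕ} (hm : 59 ≤ m) : m ^ 21 ≤ 2 ^ (2 * m + 7) := by
  induction m, hm using Nat.le_induction with
  | base => norm_num
  | succ m hm ih =>
    have hstep : 31 ^ 21 * (m + 1) ^ 21 ≤ 31 ^ 21 * (4 * m ^ 21) :=
      calc 31 ^ 21 * (m + 1) ^ 21 = (31 * (m + 1)) ^ 21 := (mul_pow ..).symm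
        _ ≤ (32 * m) ^ 21 := Nat.pow_le_pow_left (by omega) 21
        _ = 32 ^ 21 * m ^ 21 := mul_pow ..
        _ ≤ 31 ^ 21 * (4 * m ^ 21) := by rw [← mul_assoc]; gcongr; norm_num
    calc (m + 1) ^ 21 ≤ 4 * m ^ 21 := Nat.le_of_mul_le_mul_left hstep (by positivity)
      _ ≤ 4 * 2 ^ (2 * m + 7) := by gcongr
      _ = 2 ^ (2 * (m + 1) + 7) := by ring

theorem multipartitions_eight_cube_le (w : ℕ) :
    multipartitions 8 w ^ 3 ≤ envelope w ^ 3 * 32 ^ w := by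
  obtain hw | hw := lt_or_ge w 58
  · have hlen : partitionTable.length = 58 := rfl
    calc multipartitions (2 ^ 3) w ^ 3 ≤ multipartitionTable8.getD w 0 ^ 3 := by
          gcongr
          exact multipartitions_two_pow_le_getD_iterate
            (fun j hj => (multipartitions_one j).trans_le (card_partition_le_getD_partitionTable hj))
            3 w (hlen ▸ hw)
      _ ≤ envelope w ^ 3 * 32 ^ w := multipartitionTable8_cube_le w hw
  · calc multipartitions (7 + 1) w ^ 3 ≤ (2 ^ w * (w + 1) ^ 7) ^ 3 := by
          gcongr; exact multipartitions_succ_le 7 w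
      _ = 2 ^ (3 * w) * (w + 1) ^ 21 := by ring
      _ ≤ 2 ^ (3 * w) * 2 ^ (2 * (w + 1) + 7) :=
          Nat.mul_le_mul_left _ (pow_twentyOne_le_two_pow (by omega))
      _ = envelope w ^ 3 * 32 ^ w := by
          rw [envelope_of_two_le (by omega), ← pow_add, show 3 * w + (2 * (w + 1) + 7) = 9 + 5 * w by ring, pow_add, pow_mul]
          norm_num

theorem multipartitions_add_self_le_envelope {s : ℕ} {c : ℝ} (hc : 0 ≤ c)
    (hs : ∀ j, (multipartitions s j : ℝ) ≤ envelope j * c ^ j) (w : ℕ) :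
    (multipartitions (s + s) w : ℝ) ≤ envelope w * (2 * c) ^ w :=
  calc (multipartitions (s + s) w : ℝ)
      ≤ ∑ p ∈ antidiagonal w, (envelope p.1 * c ^ p.1) * (envelope p.2 * c ^ p.2) :=
        multipartitions_add_le (fun j _ => hs j) fun j _ => hs j
    _ = ((∑ p ∈ antidiagonal w, envelope p.1 * envelope p.2 : ℕ) : ℝ) * c ^ w := by
        push_cast
        rw [sum_mul]
        refine sum_congr rfl fun p hp => ?_
        rw [← mem_antidiagonal.1 hp, pow_add]
        ring
    _ ≤ ((2 ^ w * envelope w : ℕ) : ℝ) * c ^ w := by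
        gcongr
        exact sum_antidiagonal_envelope_mul_le w
    _ = envelope w * (2 * c) ^ w := by push_cast; ring

theorem multipartitions_two_pow_le_envelope {a : ℕ} (ha : 3 ≤ a) (w : ℕ) :
    (multipartitions (2 ^ a) w : ℝ) ≤ envelope w * ((2 : ℝ) ^ ((a : ℝ) - 4 / 3)) ^ w := by
  induction a, ha using Nat.le_induction generalizing w with
  | base =>
    have hcube : ((2 : ℝ) ^ ((3 : ℕ) - 4 / 3 : ℝ)) ^ 3 = 32 := by
      rw [← Real.rpow_natCast, ← Real.rpow_mul two_pos.le]; norm_num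
    rw [← pow_le_pow_iff_left₀ (Nat.cast_nonneg _) (by positivity) three_ne_zero, mul_pow,
      ← pow_mul, mul_comm w, pow_mul, hcube]
    exact_mod_cast multipartitions_eight_cube_le w
  | succ a _ ih =>
    have hdouble : (2 : ℝ) * 2 ^ ((a : ℝ) - 4 / 3) = 2 ^ (((a + 1 : ℕ) : ℝ) - 4 / 3) := by
      rw [Nat.cast_succ, add_sub_right_comm, Real.rpow_add_one two_ne_zero, mul_comm]
    rw [pow_succ, mul_two, ← hdouble]
    exact multipartitions_add_self_le_envelope (by positivity) ih w

theorem multipartitions_two_pow_le (a w : ℕ) (ha : 3 ≤ a) :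
    (multipartitions (2 ^ a) w : ℝ) ≤ (2 : ℝ) ^ (((a : ℝ) - 4 / 3) * w + 3) :=
  calc (multipartitions (2 ^ a) w : ℝ)
      ≤ envelope w * ((2 : ℝ) ^ ((a : ℝ) - 4 / 3)) ^ w := multipartitions_two_pow_le_envelope ha w
    _ ≤ 8 * ((2 : ℝ) ^ ((a : ℝ) - 4 / 3)) ^ w := by
        gcongr
        exact_mod_cast min_le_left _ _
    _ = (2 : ℝ) ^ (((a : ℝ) - 4 / 3) * w + 3) := by
        rw [Real.rpow_add two_pos, ← Real.rpow_natCast, ← Real.rpow_mul two_pos.le]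
        norm_num [mul_comm]
end

section
/- For every nonnegative integer w with w ≠ 3, the number of 3-decompositions of w satisfies p₃(w) ≤ 3^(w/6). -/
/-- `l` is an `ℓ`-decomposition of `w`: a tuple `(t₀, …, t_k)` of nonnegative integers with
`∑ tᵢ · ℓ^i = w` and last entry nonzero (the empty tuple is the decomposition of `0`). -/
def IsDecomp (ℓ w : ℕ) (l : List ℕ) : Prop :=
  (∑ i : Fin l.length, l.get i * ℓ ^ (i : ℕ)) = w ∧ l.getLast? ≠ some 0

/-- The number of `ℓ`-decompositions of `w`. -/
noncomputable def numDecomps (ℓ w : ℕ) : ℕ :=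
  Nat.card {l : List ℕ // IsDecomp ℓ w l}

/-- Finset of all 3-decompositions of `w`. -/
def DecompFinset : ℕ → Finset (List ℕ)
  | 0 => {[]}
  | (w+1) => (Finset.range ((w+1)/3+1)).attach.biUnion
      (fun j => (DecompFinset j.1).image (fun l => (w + 1 - 3*j.1) :: l))
decreasing_by
  exact Nat.lt_succ_of_le (le_trans (Nat.le_of_lt_succ (Finset.mem_range.mp j.2))
    (by omega))

def fCount (w : ℕ) : ℕ := (DecompFinset w).card

lemma fCount_zero : fCount 0 = 1 := by simp [fCount, DecompFinset]

lemma fCount_succ (w : ℕ) :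
    fCount (w+1) = ∑ j ∈ Finset.range ((w+1)/3+1), fCount j := by
  rw [fCount, DecompFinset, Finset.card_biUnion,
    ← Finset.sum_attach (Finset.range ((w+1)/3+1)) fCount]
  · congr 1; ext j
    exact Finset.card_image_of_injective _ (fun a b h => by simpa using h)
  · intro j hj k hk hjk
    apply Finset.disjoint_left.mpr
    rintro l hl hl'
    simp only [Finset.mem_image] at hl hl'
    obtain ⟨l1, _, rfl⟩ := hl
    obtain ⟨l2, _, h2⟩ := hl'
    apply hjk
    have hj3 : 3 * j.1 ≤ w + 1 := by
      have := Nat.le_of_lt_succ (Finset.mem_range.mp j.2); omega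
    have hk3 : 3 * k.1 ≤ w + 1 := by
      have := Nat.le_of_lt_succ (Finset.mem_range.mp k.2); omega
    have : w + 1 - 3*k.1 = w + 1 - 3*j.1 := by
      have := List.head_eq_of_cons_eq h2
      simpa using this
    have : j.1 = k.1 := by omega
    exact Subtype.ext this

lemma sum_eq_ofDigits (b : ℕ) (l : List ℕ) :
    (∑ i : Fin l.length, l.get i * b ^ (i : ℕ)) = Nat.ofDigits b l := by
  induction l with
  | nil => simp
  | cons a l ih =>
    rw [Nat.ofDigits_cons, ← ih]
    simp [Fin.sum_univ_succ, pow_succ, Finset.mul_sum]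
    ring_nf
    simp [mul_comm, mul_assoc, mul_left_comm]

lemma isDecomp_iff (w : ℕ) (l : List ℕ) :
    IsDecomp 3 w l ↔ Nat.ofDigits 3 l = w ∧ l.getLast? ≠ some 0 := by
  rw [IsDecomp, sum_eq_ofDigits]

lemma getLast?_cons' (a : ℕ) (l : List ℕ) :
    (a :: l).getLast? = if l = [] then some a else l.getLast? := by
  cases l with
  | nil => simp
  | cons b t => simp [List.getLast?_cons_cons]

lemma eq_nil_of_ofDigits_eq_zero (l : List ℕ) (h : Nat.ofDigits 3 l = 0)
    (h2 : l.getLast? ≠ some 0) : l = [] := by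
  induction l with
  | nil => rfl
  | cons a t ih =>
    rw [Nat.ofDigits_cons] at h
    have ha : a = 0 := by omega
    have ht : Nat.ofDigits 3 t = 0 := by omega
    subst ha
    rw [getLast?_cons'] at h2
    cases t with
    | nil => simp at h2
    | cons b t' =>
      simp only [if_neg (List.cons_ne_nil b t')] at h2
      exact absurd (ih ht h2) (List.cons_ne_nil b t')

lemma mem_DecompFinset_iff (w : ℕ) (l : List ℕ) :
    l ∈ DecompFinset w ↔ IsDecomp 3 w l := by
  induction w using Nat.strong_induction_on generalizing l with
  | _ w ih =>
  match w with
  | 0 =>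
    simp only [DecompFinset, Finset.mem_singleton, isDecomp_iff]
    constructor
    · rintro rfl; simp
    · rintro ⟨h1, h2⟩
      exact eq_nil_of_ofDigits_eq_zero l h1 h2
  | w+1 =>
    rw [DecompFinset]
    simp only [Finset.mem_biUnion, Finset.mem_attach, Finset.mem_image, true_and,
      Subtype.exists, Finset.mem_range, isDecomp_iff]
    constructor
    · rintro ⟨j, hj, t, ht, rfl⟩
      have hj' : j ≤ (w+1)/3 := Nat.le_of_lt_succ hj
      have h3j : 3 * j ≤ w + 1 := by omega
      rw [ih j (by omega), isDecomp_iff] at ht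
      obtain ⟨ht1, ht2⟩ := ht
      constructor
      · rw [Nat.ofDigits_cons, ht1]; omega
      · rw [getLast?_cons']
        split
        · rename_i h
          subst h
          simp only [ne_eq, Option.some.injEq]
          simp [Nat.ofDigits_nil] at ht1
          omega
        · exact ht2
    · rintro ⟨h1, h2⟩
      cases l with
      | nil => simp at h1
      | cons a t =>
        rw [Nat.ofDigits_cons] at h1
        refine ⟨Nat.ofDigits 3 t, by omega, t, ?_,
          by rw [show w + 1 - 3 * Nat.ofDigits 3 t = a by omega]⟩
        rw [ih (Nat.ofDigits 3 t) (by omega), isDecomp_iff]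
        refine ⟨rfl, ?_⟩
        rw [getLast?_cons'] at h2
        cases t with
        | nil => simp
        | cons b t' => simpa using h2

lemma numDecomps_eq_fCount (w : ℕ) : numDecomps 3 w = fCount w := by
  rw [numDecomps, fCount,
    Nat.card_congr (Equiv.subtypeEquivRight (fun l => (mem_DecompFinset_iff w l).symm)),
    Nat.card_eq_fintype_card, Fintype.card_coe]

lemma fCount_pos_eq (w : ℕ) (h : 0 < w) :
    fCount w = ∑ j ∈ Finset.range (w/3+1), fCount j := by
  obtain ⟨v, rfl⟩ := Nat.exists_eq_succ_of_ne_zero h.ne'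
  exact fCount_succ v

lemma fCount_one : fCount 1 = 1 := by
  rw [fCount_pos_eq 1 one_pos]; norm_num [fCount_zero]
lemma fCount_two : fCount 2 = 1 := by
  rw [fCount_pos_eq 2 (by norm_num)]; norm_num [fCount_zero]
lemma fCount_three : fCount 3 = 2 := by
  rw [fCount_pos_eq 3 (by norm_num)]
  norm_num [Finset.sum_range_succ, fCount_zero, fCount_one]
lemma fCount_four : fCount 4 = 2 := by
  rw [fCount_pos_eq 4 (by norm_num)]
  norm_num [Finset.sum_range_succ, fCount_zero, fCount_one]
lemma fCount_five : fCount 5 = 2 := by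
  rw [fCount_pos_eq 5 (by norm_num)]
  norm_num [Finset.sum_range_succ, fCount_zero, fCount_one]
lemma fCount_six : fCount 6 = 3 := by
  rw [fCount_pos_eq 6 (by norm_num)]
  norm_num [Finset.sum_range_succ, fCount_zero, fCount_one, fCount_two]
lemma fCount_seven : fCount 7 = 3 := by
  rw [fCount_pos_eq 7 (by norm_num)]
  norm_num [Finset.sum_range_succ, fCount_zero, fCount_one, fCount_two]
lemma fCount_eight : fCount 8 = 3 := by
  rw [fCount_pos_eq 8 (by norm_num)]
  norm_num [Finset.sum_range_succ, fCount_zero, fCount_one, fCount_two]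
lemma fCount_nine : fCount 9 = 5 := by
  rw [fCount_pos_eq 9 (by norm_num)]
  norm_num [Finset.sum_range_succ, fCount_zero, fCount_one, fCount_two, fCount_three]
lemma fCount_ten : fCount 10 = 5 := by
  rw [fCount_pos_eq 10 (by norm_num)]
  norm_num [Finset.sum_range_succ, fCount_zero, fCount_one, fCount_two, fCount_three]
lemma fCount_eleven : fCount 11 = 5 := by
  rw [fCount_pos_eq 11 (by norm_num)]
  norm_num [Finset.sum_range_succ, fCount_zero, fCount_one, fCount_two, fCount_three]

lemma fCount_mono : Monotone fCount := by
  apply monotone_nat_of_le_succ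
  intro w
  match w with
  | 0 => rw [fCount_zero, fCount_one]
  | v+1 =>
    rw [fCount_pos_eq (v+1) (by omega), fCount_pos_eq (v+2) (by omega)]
    apply Finset.sum_le_sum_of_subset
    apply Finset.range_subset_range.mpr
    omega

lemma key_lemma (m : ℕ) (hm : 4 ≤ m) : 2 * fCount m ≤ fCount (3*m - 3) := by
  set q := m / 3 with hq
  have h1 : fCount m = ∑ j ∈ Finset.range (q+1), fCount j :=
    fCount_pos_eq m (by omega)
  have h2 : fCount (3*m - 3) = ∑ j ∈ Finset.range m, fCount j := by
    rw [fCount_pos_eq (3*m-3) (by omega)]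
    congr 2
    omega
  rw [h1, h2]
  have hsplit : ∑ j ∈ Finset.range (q+1), fCount j + ∑ j ∈ Finset.Ico (q+1) m, fCount j
      = ∑ j ∈ Finset.range m, fCount j :=
    Finset.sum_range_add_sum_Ico fCount (by omega)
  have hstep : ∑ j ∈ Finset.range (q+1), fCount j ≤ ∑ j ∈ Finset.Ico (q+1) m, fCount j := by
    calc ∑ j ∈ Finset.range (q+1), fCount j
        ≤ ∑ j ∈ Finset.range (q+1), fCount (q+1+j) := by
          apply Finset.sum_le_sum
          intro i _
          exact fCount_mono (by omega)
      _ = ∑ j ∈ Finset.Ico (q+1) (2*q+2), fCount j := by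
          rw [Finset.sum_Ico_eq_sum_range,
            show 2*q+2 - (q+1) = q+1 by omega]
      _ ≤ ∑ j ∈ Finset.Ico (q+1) m, fCount j := by
          apply Finset.sum_le_sum_of_subset
          apply Finset.Ico_subset_Ico le_rfl
          omega
  linarith [hsplit, hstep]

lemma fCount_pow_le (w : ℕ) (hw : w ≠ 3) : fCount w ^ 6 ≤ 3 ^ w := by
  induction w using Nat.strong_induction_on with
  | _ w ih =>
  rcases lt_or_ge w 12 with h | h
  · interval_cases w <;>
      simp_all [fCount_zero, fCount_one, fCount_two, fCount_three, fCount_four,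
        fCount_five, fCount_six, fCount_seven, fCount_eight, fCount_nine,
        fCount_ten, fCount_eleven]
  · have hm : 4 ≤ w / 3 := by omega
    have key : fCount w = fCount (w-3) + fCount (w/3) := by
      have hd : (w-3)/3 + 1 = w/3 := by omega
      rw [fCount_pos_eq w (by omega), fCount_pos_eq (w-3) (by omega), hd,
        Finset.sum_range_succ]
    have a6 : fCount (w-3) ^ 6 ≤ 3 ^ (w-3) := ih (w-3) (by omega) (by omega)
    have hA : 2 * fCount (w/3) ≤ fCount (w-3) := by
      calc 2 * fCount (w/3) ≤ fCount (3*(w/3) - 3) := key_lemma _ hm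
        _ ≤ fCount (w-3) := fCount_mono (by omega)
    have h2 : 2 * fCount w ≤ 3 * fCount (w-3) := by omega
    have h64 : 64 * fCount w ^ 6 ≤ 729 * fCount (w-3) ^ 6 := by
      calc 64 * fCount w ^ 6 = (2 * fCount w) ^ 6 := by ring
        _ ≤ (3 * fCount (w-3)) ^ 6 := Nat.pow_le_pow_left h2 6
        _ = 729 * fCount (w-3) ^ 6 := by ring
    have h27 : 729 * 3 ^ (w-3) = 27 * 3 ^ w := by
      have hww : w - 3 + 3 = w := by omega
      calc 729 * 3 ^ (w-3) = 27 * (3 ^ (w-3) * 3 ^ 3) := by ring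
        _ = 27 * 3 ^ (w-3+3) := by rw [pow_add]
        _ = 27 * 3 ^ w := by rw [hww]
    have hfin : 64 * fCount w ^ 6 ≤ 64 * 3 ^ w := by
      calc 64 * fCount w ^ 6 ≤ 729 * fCount (w-3) ^ 6 := h64
        _ ≤ 729 * 3 ^ (w-3) := Nat.mul_le_mul_left _ a6
        _ = 27 * 3 ^ w := h27
        _ ≤ 64 * 3 ^ w := Nat.mul_le_mul_right _ (by norm_num)
    exact Nat.le_of_mul_le_mul_left hfin (by norm_num)

theorem numDecomps_three_le (w : ℕ) (hw : w ≠ 3) :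
    (numDecomps 3 w : ℝ) ≤ (3 : ℝ) ^ ((w : ℝ) / 6) := by
  rw [numDecomps_eq_fCount]
  have h : ((fCount w : ℝ)) ^ (6:ℕ) ≤ (3:ℝ) ^ (w:ℕ) := by
    exact_mod_cast fCount_pow_le w hw
  have h6 : (((fCount w : ℝ)) ^ (6:ℕ)) ^ ((1:ℝ)/6) ≤ ((3:ℝ) ^ (w:ℕ)) ^ ((1:ℝ)/6) :=
    Real.rpow_le_rpow (by positivity) h (by norm_num)
  calc (fCount w : ℝ) = (((fCount w : ℝ)) ^ (6:ℕ)) ^ ((1:ℝ)/6) := by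
        rw [← Real.rpow_natCast (fCount w : ℝ) 6, ← Real.rpow_mul (by positivity)]
        norm_num
    _ ≤ ((3:ℝ) ^ (w:ℕ)) ^ ((1:ℝ)/6) := h6
    _ = (3:ℝ) ^ ((w:ℝ)/6) := by
        rw [← Real.rpow_natCast (3:ℝ) w, ← Real.rpow_mul (by norm_num)]
        congr 1
        ring
end

section
/- For every integer w ≥ 0, the number of binary decompositions of w satisfies p₂(w) ≤ 2^(w/3 + 1). -/
theorem sum_get_mul_pow_eq_ofDigits (ℓ : ℕ) (l : List ℕ) :
    ∑ i : Fin l.length, l.get i * ℓ ^ (i : ℕ) = Nat.ofDigits ℓ l := by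
  induction l with
  | nil => rfl
  | cons a t ih =>
    rw [Nat.ofDigits_cons, ← ih, Finset.mul_sum]
    simp [Fin.sum_univ_succ, pow_succ', mul_assoc, mul_comm]

namespace IsDecomp

variable {ℓ w a : ℕ} {l t : List ℕ}

theorem iff_ofDigits : IsDecomp ℓ w l ↔ Nat.ofDigits ℓ l = w ∧ l.getLast? ≠ some 0 := by
  rw [IsDecomp, sum_get_mul_pow_eq_ofDigits]

theorem nil_iff : IsDecomp ℓ w [] ↔ w = 0 := by
  simp [iff_ofDigits, eq_comm]

theorem singleton_iff : IsDecomp ℓ w [a] ↔ a = w ∧ a ≠ 0 := by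
  simp [iff_ofDigits]

theorem ofDigits_eq (h : IsDecomp ℓ w l) : Nat.ofDigits ℓ l = w :=
  (iff_ofDigits.mp h).1

theorem tail (h : IsDecomp ℓ w (a :: t)) : IsDecomp ℓ (Nat.ofDigits ℓ t) t := by
  refine iff_ofDigits.mpr ⟨rfl, ?_⟩
  cases t with
  | nil => simp
  | cons b u => simpa [List.getLast?_cons_cons] using (iff_ofDigits.mp h).2

theorem cons (h : IsDecomp ℓ w t) (ht : t ≠ []) : IsDecomp ℓ (a + ℓ * w) (a :: t) := by
  obtain ⟨b, u, rfl⟩ := List.exists_cons_of_ne_nil ht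
  refine iff_ofDigits.mpr ⟨by rw [Nat.ofDigits_cons, h.ofDigits_eq], ?_⟩
  simpa [List.getLast?_cons_cons] using (iff_ofDigits.mp h).2

theorem pos (hℓ : 0 < ℓ) (h : IsDecomp ℓ w l) (hl : l ≠ []) : 0 < w := by
  induction l generalizing w with
  | nil => exact absurd rfl hl
  | cons a t ih =>
    rcases eq_or_ne t [] with rfl | ht
    · obtain ⟨rfl, ha⟩ := singleton_iff.mp h
      exact Nat.pos_of_ne_zero ha
    · have := ih h.tail ht
      rw [← h.ofDigits_eq, Nat.ofDigits_cons]
      positivity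

end IsDecomp

def decomps (ℓ w : ℕ) : Set (List ℕ) := {l | IsDecomp ℓ w l}

variable {ℓ w : ℕ}

theorem numDecomps_eq_ncard : numDecomps ℓ w = (decomps ℓ w).ncard := rfl

theorem decomps_subset_digits (hw : w < ℓ) : decomps ℓ w ⊆ {Nat.digits ℓ w} := by
  rintro (_ | ⟨a, t⟩) hl
  · simp [IsDecomp.nil_iff.mp hl]
  · rcases eq_or_ne t [] with rfl | ht
    · obtain ⟨rfl, ha⟩ := IsDecomp.singleton_iff.mp hl
      simp [Nat.digits_of_lt _ _ ha hw]
    · have htail := hl.tail.pos (by omega) ht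
      have hval : a + ℓ * Nat.ofDigits ℓ t = w := hl.ofDigits_eq
      nlinarith

theorem decomps_subset (hℓ : 0 < ℓ) (hw : ℓ ≤ w) :
    decomps ℓ w ⊆ (fun l => (l.headD 0 + ℓ) :: l.tail) '' decomps ℓ (w - ℓ) ∪
      List.cons (w % ℓ) '' decomps ℓ (w / ℓ) := by
  rintro (_ | ⟨a, t⟩) hl
  · have := IsDecomp.nil_iff.mp hl
    omega
  rcases eq_or_ne t [] with rfl | ht
  · obtain ⟨rfl, -⟩ := IsDecomp.singleton_iff.mp hl
    left
    rcases eq_or_ne a ℓ with rfl | haℓ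
    · exact ⟨[], IsDecomp.nil_iff.mpr (Nat.sub_self a), by simp⟩
    · exact ⟨[a - ℓ], IsDecomp.singleton_iff.mpr ⟨rfl, by omega⟩, by simp; omega⟩
  have hval : a + ℓ * Nat.ofDigits ℓ t = w := hl.ofDigits_eq
  by_cases ha : ℓ ≤ a
  · left
    refine ⟨(a - ℓ) :: t, ?_, by simp; omega⟩
    have := hl.tail.cons (a := a - ℓ) ht
    rwa [show a - ℓ + ℓ * Nat.ofDigits ℓ t = w - ℓ by omega] at this
  · right
    replace ha := Nat.lt_of_not_le ha
    have hdiv : w / ℓ = Nat.ofDigits ℓ t := by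
      rw [← hval, Nat.add_mul_div_left _ _ hℓ, Nat.div_eq_of_lt ha, zero_add]
    have hmod : w % ℓ = a := by
      rw [← hval, Nat.add_mul_mod_self_left, Nat.mod_eq_of_lt ha]
    exact ⟨t, hdiv ▸ hl.tail, by rw [hmod]⟩

theorem decomps_finite (hℓ : 1 < ℓ) (w : ℕ) : (decomps ℓ w).Finite := by
  induction w using Nat.strong_induction_on with
  | _ w ih =>
    rcases lt_or_ge w ℓ with hw | hw
    · exact (Set.finite_singleton _).subset (decomps_subset_digits hw)
    · refine Set.Finite.subset ?_ (decomps_subset (by omega) hw)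
      exact ((ih _ (by omega)).image _).union
        ((ih _ (Nat.div_lt_self (by omega) (by omega))).image _)

theorem numDecomps_le_one (hw : w < ℓ) : numDecomps ℓ w ≤ 1 :=
  numDecomps_eq_ncard ▸
    (Set.ncard_le_ncard (decomps_subset_digits hw)).trans (Set.ncard_singleton _).le

theorem numDecomps_le_sub_add_div (hℓ : 1 < ℓ) (hw : ℓ ≤ w) :
    numDecomps ℓ w ≤ numDecomps ℓ (w - ℓ) + numDecomps ℓ (w / ℓ) := by
  have hfin := decomps_finite hℓ
  simp only [numDecomps_eq_ncard]
  calc (decomps ℓ w).ncard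
      ≤ _ := Set.ncard_le_ncard (decomps_subset (by omega) hw)
          (((hfin _).image _).union ((hfin _).image _))
    _ ≤ _ := Set.ncard_union_le _ _
    _ ≤ _ := add_le_add (Set.ncard_image_le (hfin _)) (Set.ncard_image_le (hfin _))

section CubeRootOfTwo

variable {r : ℝ}

theorem one_le_of_pow_three_eq_two (hr : r ^ 3 = 2) : 1 ≤ r := by
  nlinarith [sq_nonneg (r + 1 / 2), sq_nonneg (r - 1)]

theorem three_halves_le_sq_of_pow_three_eq_two (hr : r ^ 3 = 2) : 3 / 2 ≤ r ^ 2 := by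
  have h1 := one_le_of_pow_three_eq_two hr
  nlinarith [sq_nonneg (r ^ 2 - 3 / 2), sq_nonneg r]

theorem pow_eq_two_pow_mul_pow_mod (hr : r ^ 3 = 2) (w : ℕ) :
    r ^ w = 2 ^ (w / 3) * r ^ (w % 3) := by
  conv_lhs => rw [← Nat.div_add_mod w 3, pow_add, pow_mul, hr]

theorem two_mul_pow_sub_two_add_le {w : ℕ} (hr : r ^ 3 = 2) (hw : 9 ≤ w) :
    2 * r ^ (w - 2) + 2 * r ^ (w / 2) ≤ 2 * r ^ w := by
  obtain ⟨d, hd⟩ : ∃ d, w - 2 = w / 2 + d + 3 := ⟨w - 2 - w / 2 - 3, by omega⟩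
  have h1 := one_le_of_pow_three_eq_two hr
  have h2 := three_halves_le_sq_of_pow_three_eq_two hr
  have hd1 : 1 ≤ r ^ d := one_le_pow₀ h1
  have hk : 0 ≤ r ^ (w / 2) := by positivity
  have key : 1 ≤ 2 * r ^ d * (r ^ 2 - 1) := by nlinarith
  have hsplit : r ^ w = r ^ (w - 2) * r ^ 2 := by rw [← pow_add, Nat.sub_add_cancel (by omega)]
  rw [hsplit, hd, pow_add, pow_add, hr]
  nlinarith [mul_le_mul_of_nonneg_left key hk]

theorem le_two_mul_pow_of_le_sub_two_add_half (hr : r ^ 3 = 2) {q : ℕ → ℝ}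
    (h0 : q 0 ≤ 1) (h1 : q 1 ≤ 1)
    (hq : ∀ w, 2 ≤ w → q w ≤ q (w - 2) + q (w / 2)) (w : ℕ) : q w ≤ 2 * r ^ w := by
  induction w using Nat.strong_induction_on with
  | _ w ih =>
    rcases le_or_gt 9 w with hw | hw
    · calc q w ≤ q (w - 2) + q (w / 2) := hq w (by omega)
        _ ≤ 2 * r ^ (w - 2) + 2 * r ^ (w / 2) := add_le_add (ih _ (by omega)) (ih _ (by omega))
        _ ≤ 2 * r ^ w := two_mul_pow_sub_two_add_le hr hw
    · have h2 : q 2 ≤ 2 := by have := hq 2 (by norm_num); norm_num at this; linarith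
      have h3 : q 3 ≤ 2 := by have := hq 3 (by norm_num); norm_num at this; linarith
      have h4 : q 4 ≤ 4 := by have := hq 4 (by norm_num); norm_num at this; linarith
      have h5 : q 5 ≤ 4 := by have := hq 5 (by norm_num); norm_num at this; linarith
      have h6 : q 6 ≤ 6 := by have := hq 6 (by norm_num); norm_num at this; linarith
      have h7 : q 7 ≤ 6 := by have := hq 7 (by norm_num); norm_num at this; linarith
      have h8 : q 8 ≤ 10 := by have := hq 8 (by norm_num); norm_num at this; linarith
      have hr1 := one_le_of_pow_three_eq_two hr
      have hr2 := three_halves_le_sq_of_pow_three_eq_two hr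
      rw [pow_eq_two_pow_mul_pow_mod hr]
      interval_cases w <;> norm_num <;> linarith

end CubeRootOfTwo

theorem numDecomps_two_le (w : ℕ) :
    (numDecomps 2 w : ℝ) ≤ (2 : ℝ) ^ ((w : ℝ) / 3 + 1) := by
  set r : ℝ := 2 ^ ((1 : ℝ) / 3)
  have hr : r ^ 3 = 2 := by
    rw [← Real.rpow_mul_natCast (by norm_num)]
    norm_num
  have hbound : (numDecomps 2 w : ℝ) ≤ 2 * r ^ w :=
    le_two_mul_pow_of_le_sub_two_add_half (q := fun w => (numDecomps 2 w : ℝ)) hr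
      (mod_cast numDecomps_le_one (by norm_num)) (mod_cast numDecomps_le_one (by norm_num))
      (fun w hw => mod_cast numDecomps_le_sub_add_div one_lt_two hw) w
  calc (numDecomps 2 w : ℝ) ≤ 2 * r ^ w := hbound
    _ = (2 : ℝ) ^ ((w : ℝ) / 3 + 1) := by
      rw [← Real.rpow_mul_natCast (by norm_num), Real.rpow_add_one (by norm_num)]
      ring_nf
end

section
/- Let a ≥ 2, let w ≥ 6 be a positive integer divisible by 3, and let 1 ≤ j ≤ min{a, log₃(w₃)}, where w₃ is the largest power of 3 dividing w. Then 3j + aw/3^j ≤ (a − 5/6)·w. -/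
lemma pow_ge_aux (j : ℕ) (hj : 2 ≤ j) : 4 * j + 1 ≤ 3 ^ j := by
  induction j with
  | zero => omega
  | succ n ih =>
    rcases Nat.lt_or_ge n 2 with h | h
    · interval_cases n <;> simp_all
    · have := ih h
      have h3 : 3 ^ n ≥ 1 := Nat.one_le_pow _ _ (by norm_num)
      calc 4 * (n + 1) + 1 ≤ 3 * (4 * n + 1) := by omega
        _ ≤ 3 * 3 ^ n := by omega
        _ = 3 ^ (n + 1) := by ring

theorem three_j_add_le (a w j : ℕ) (ha : 2 ≤ a) (hw : 6 ≤ w) (h3 : 3 ∣ w)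
    (hj1 : 1 ≤ j) (hj2 : j ≤ min a (padicValNat 3 w)) :
    (3 * j : ℚ) + (a : ℚ) * w / 3 ^ j ≤ ((a : ℚ) - 5 / 6) * w := by
  have hja : j ≤ a := le_trans hj2 (min_le_left _ _)
  have hjv : j ≤ padicValNat 3 w := le_trans hj2 (min_le_right _ _)
  have hw0 : w ≠ 0 := by omega
  have hdvd : 3 ^ j ∣ w :=
    dvd_trans (pow_dvd_pow 3 hjv) (pow_padicValNat_dvd)
  obtain ⟨m, hm⟩ := hdvd
  have hm1 : 1 ≤ m := by
    rcases Nat.eq_zero_or_pos m with h | h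
    · simp [h] at hm; omega
    · exact h
  have hwq : (w : ℚ) = 3 ^ j * m := by exact_mod_cast hm
  have hpow0 : (3 : ℚ) ^ j ≠ 0 := by positivity
  have hdiv : (a : ℚ) * w / 3 ^ j = a * m := by
    rw [hwq]; field_simp
  rw [hdiv, hwq]
  rcases eq_or_lt_of_le hj1 with h1 | h2
  · -- j = 1
    have hj : j = 1 := h1.symm
    subst hj
    have hm2 : 2 ≤ m := by omega
    have hmq : (2 : ℚ) ≤ m := by exact_mod_cast hm2
    have haq : (2 : ℚ) ≤ a := by exact_mod_cast ha
    nlinarith [mul_le_mul haq hmq (by norm_num) (by linarith)]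
  · -- j ≥ 2
    have hj2' : 2 ≤ j := h2
    have hpge : (4 * j + 1 : ℕ) ≤ 3 ^ j := pow_ge_aux j hj2'
    have hpgeq : (4 * (j : ℚ) + 1) ≤ 3 ^ j := by exact_mod_cast hpge
    have hmq : (1 : ℚ) ≤ m := by exact_mod_cast hm1
    have haq : (2 : ℚ) ≤ a := by exact_mod_cast ha
    have hjaq : (j : ℚ) ≤ a := by exact_mod_cast hja
    have hjq : (2 : ℚ) ≤ j := by exact_mod_cast hj2'
    nlinarith [mul_le_mul haq hmq (by norm_num) (by linarith),
      mul_nonneg (sub_nonneg.2 haq) (sub_nonneg.2 hmq),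
      mul_nonneg (mul_nonneg (sub_nonneg.2 haq) (sub_nonneg.2 hmq)) (by linarith : (0:ℚ) ≤ 3 ^ j - 1),
      mul_le_mul_of_nonneg_left hpgeq (by positivity : (0:ℚ) ≤ (a:ℚ) * m)]
end
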